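/- arXiv:2210.15590 — 4 statements merged into one kernel-verified Lean document; each statement's English description precedes it below -/
import Mathlib

section
/- Let m, l be positive integers, u: ℝ → ℝ^m and v: ℝ → ℝ^l be 2π-periodic measurable functions, and Φ: ℝ^m × ℝ^l × [0,∞) → ℝ be such that (x,y) ↦ Φ(u(x), v(y), |x−y|) is integrable on (−π,π) × ℝ. Then this function is also integrable on ℝ × (−π,π) and ∫_{−π}^{π} ∫_ℝ Φ(u(x), v(y), |x−y|) dy dx = ∫_ℝ ∫_{−π}^{π} Φ(u(x), v(y), |x−y|) dy dx. -/
open MeasureTheory Set Real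

private lemma per_intervalIntegrable {g : ℝ → ℝ} (hg : Function.Periodic g (2*π))
    (h : IntervalIntegrable g volume (-π) π) (a b : ℝ) :
    IntervalIntegrable g volume a b := by
  have hπ := pi_pos
  have h2π : (0:ℝ) < 2*π := by linarith
  have hI : ∀ k : ℤ, IntervalIntegrable g volume (-π + k*(2*π)) (π + k*(2*π)) := by
    intro k
    have h2 := h.comp_add_right (-((k:ℝ)*(2*π)))
    have heq : (fun x => g (x + -((k:ℝ)*(2*π)))) = g := by
      funext x
      rw [← sub_eq_add_neg]
      exact hg.sub_int_mul_eq k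
    rw [heq] at h2
    have e1 : -π - -((k:ℝ)*(2*π)) = -π + k*(2*π) := by ring
    have e2 : π - -((k:ℝ)*(2*π)) = π + k*(2*π) := by ring
    rwa [e1, e2] at h2
  have hJ : ∀ n : ℕ, IntervalIntegrable g volume (-π - n*(2*π)) (π + n*(2*π)) := by
    intro n
    induction n with
    | zero => simpa using h
    | succ n ih =>
      have h1 := hI (-(n+1) : ℤ)
      have h2 := hI ((n+1) : ℤ)
      push_cast at h1 h2
      have e1 : -π + (-((n:ℝ)+1))*(2*π) = -π - ((n:ℝ)+1)*(2*π) := by ring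
      have e2 : π + (-((n:ℝ)+1))*(2*π) = -π - (n : ℝ)*(2*π) := by ring
      have e3 : -π + (((n:ℝ)+1))*(2*π) = π + (n:ℝ)*(2*π) := by ring
      have e4 : ((n:ℝ)+1) = ((n+1 : ℕ) : ℝ) := by push_cast; ring
      rw [e1, e2] at h1
      rw [e3] at h2
      have h5 := (h1.trans ih).trans h2
      rwa [e4] at h5
  obtain ⟨n, hn⟩ := exists_nat_gt ((|a| + |b|)/(2*π))
  have hbig : |a| + |b| < n*(2*π) := by
    have := (div_lt_iff₀ h2π).mp hn
    linarith
  have hnn : (0:ℝ) ≤ (n:ℝ)*(2*π) := by positivity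
  have hlohi : -π - n*(2*π) ≤ π + n*(2*π) := by linarith
  refine (hJ n).mono_set ?_
  have habs : ∀ x : ℝ, |x| ≤ |a| + |b| → x ∈ Icc (-π - n*(2*π)) (π + n*(2*π)) := by
    intro x hx
    have h1 := abs_le.mp (le_of_lt (lt_of_le_of_lt hx hbig))
    exact ⟨by linarith [h1.1], by linarith [h1.2]⟩
  refine uIcc_subset_uIcc ?_ ?_ <;> rw [uIcc_of_le hlohi]
  · exact habs a (le_add_of_nonneg_right (abs_nonneg b))
  · exact habs b (le_add_of_nonneg_left (abs_nonneg a))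

private lemma shift_integrableOn {g : ℝ → ℝ} (hg : Function.Periodic g (2*π)) (t : ℝ)
    (h : IntegrableOn g (Ioo (-π) π)) :
    IntegrableOn (fun y => g (y + t)) (Ioo (-π) π) := by
  have hle : (-π:ℝ) ≤ π := by linarith [pi_pos]
  rw [← intervalIntegrable_iff_integrableOn_Ioo_of_le hle] at h ⊢
  have h2 := (per_intervalIntegrable hg h (-π + t) (π + t)).comp_add_right t
  have e1 : -π + t - t = -π := by ring
  have e2 : π + t - t = π := by ring
  rwa [e1, e2] at h2

private lemma shift_setIntegral {g : ℝ → ℝ} (hg : Function.Periodic g (2*π)) (t : ℝ) :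
    ∫ y in Ioo (-π) π, g (y + t) = ∫ y in Ioo (-π) π, g y := by
  have hle : (-π:ℝ) ≤ π := by linarith [pi_pos]
  rw [← integral_Ioc_eq_integral_Ioo, ← integral_Ioc_eq_integral_Ioo,
    ← intervalIntegral.integral_of_le hle, ← intervalIntegral.integral_of_le hle,
    intervalIntegral.integral_comp_add_right]
  have h2 := hg.intervalIntegral_add_eq (-π + t) (-π)
  have e1 : -π + t + 2*π = π + t := by ring
  have e2 : -π + 2*π = π := by ring
  rwa [e1, e2] at h2

theorem stmt_0 (m l : ℕ) (hm : 0 < m) (hl : 0 < l)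
    (u : ℝ → (Fin m → ℝ)) (v : ℝ → (Fin l → ℝ))
    (hu : Measurable u) (hv : Measurable v)
    (huper : ∀ x, u (x + 2 * π) = u x) (hvper : ∀ x, v (x + 2 * π) = v x)
    (Φ : (Fin m → ℝ) → (Fin l → ℝ) → ℝ → ℝ)
    (hint : IntegrableOn (fun p : ℝ × ℝ => Φ (u p.1) (v p.2) |p.1 - p.2|)
      ((Set.Ioo (-π) π) ×ˢ (Set.univ : Set ℝ))) :
    IntegrableOn (fun p : ℝ × ℝ => Φ (u p.1) (v p.2) |p.1 - p.2|)
      ((Set.univ : Set ℝ) ×ˢ (Set.Ioo (-π) π)) ∧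
    ∫ x in Set.Ioo (-π) π, ∫ y, Φ (u x) (v y) |x - y| =
      ∫ x, ∫ y in Set.Ioo (-π) π, Φ (u x) (v y) |x - y| := by
  have hπ := pi_pos
  set F : ℝ × ℝ → ℝ := fun p => Φ (u p.1) (v p.2) |p.1 - p.2| with hFdef
  set μ : Measure ℝ := volume.restrict (Ioo (-π) π) with hμdef
  have hρ : μ.prod (volume : Measure ℝ)
      = (volume : Measure (ℝ × ℝ)).restrict ((Ioo (-π) π) ×ˢ (univ : Set ℝ)) := by
    rw [Measure.volume_eq_prod, ← Measure.prod_restrict, Measure.restrict_univ, hμdef]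
  have hρ' : (volume : Measure ℝ).prod μ
      = (volume : Measure (ℝ × ℝ)).restrict ((univ : Set ℝ) ×ˢ (Ioo (-π) π)) := by
    rw [Measure.volume_eq_prod, ← Measure.prod_restrict, Measure.restrict_univ, hμdef]
  have hF1 : Integrable F (μ.prod volume) := by rw [hρ]; exact hint
  -- F is invariant under diagonal translations by 2kπ
  have hFkey : ∀ (k : ℤ) (p : ℝ × ℝ),
      F (p.1 + (k:ℝ)*(2*π), p.2 + (k:ℝ)*(2*π)) = F p := by
    intro k p
    have hu2 : Function.Periodic u (2*π) := huper
    have hv2 : Function.Periodic v (2*π) := hvper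
    have h1 : u (p.1 + (k:ℝ)*(2*π)) = u p.1 := by
      have h := hu2.sub_int_mul_eq (x := p.1 + (k:ℝ)*(2*π)) k
      symm
      simpa using h
    have h2 : v (p.2 + (k:ℝ)*(2*π)) = v p.2 := by
      have h := hv2.sub_int_mul_eq (x := p.2 + (k:ℝ)*(2*π)) k
      symm
      simpa using h
    show Φ (u (p.1 + (k:ℝ)*(2*π))) (v (p.2 + (k:ℝ)*(2*π)))
        |(p.1 + (k:ℝ)*(2*π)) - (p.2 + (k:ℝ)*(2*π))| = Φ (u p.1) (v p.2) |p.1 - p.2|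
    rw [h1, h2, show (p.1 + (k:ℝ)*(2*π)) - (p.2 + (k:ℝ)*(2*π)) = p.1 - p.2 from by ring]
  -- the shear measurable equiv
  let e : (ℝ × ℝ) ≃ᵐ (ℝ × ℝ) :=
    { toFun := fun p => (p.1, p.1 + p.2)
      invFun := fun p => (p.1, p.2 - p.1)
      left_inv := fun p => by simp
      right_inv := fun p => by simp
      measurable_toFun := (measurable_fst.prodMk (measurable_fst.add measurable_snd))
      measurable_invFun := (measurable_fst.prodMk (measurable_snd.sub measurable_fst)) }
  let e2 : (ℝ × ℝ) ≃ᵐ (ℝ × ℝ) := e.trans MeasurableEquiv.prodComm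
  have hskew : ∀ (ν : Measure ℝ) [SFinite ν],
      MeasurePreserving e (ν.prod volume) (ν.prod volume) := by
    intro ν hν
    exact (MeasurePreserving.id ν).skew_product
      (g := fun x t => x + t) (measurable_fst.add measurable_snd)
      (Filter.Eventually.of_forall fun x => map_add_left_eq_self volume x)
  have heμ : MeasurePreserving e (μ.prod volume) (μ.prod volume) := hskew μ
  have heL : MeasurePreserving e ((volume : Measure ℝ).prod volume)
      ((volume : Measure ℝ).prod volume) := hskew volume
  have he2μ : MeasurePreserving e2 (μ.prod volume) ((volume : Measure ℝ).prod μ) :=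
    (Measure.measurePreserving_swap).comp heμ
  have he2L : MeasurePreserving e2 ((volume : Measure ℝ).prod volume)
      ((volume : Measure ℝ).prod volume) :=
    (Measure.measurePreserving_swap).comp heL
  set H₁ : ℝ × ℝ → ℝ := F ∘ e with hH1def
  set H₂ : ℝ × ℝ → ℝ := F ∘ e2 with hH2def
  -- a.e. strong measurability of F on the whole plane
  have hFmeas : AEStronglyMeasurable F (volume : Measure (ℝ × ℝ)) := by
    set s : ℤ → Set (ℝ × ℝ) :=
      fun k => (Ioo (-π + k*(2*π)) (π + k*(2*π))) ×ˢ (univ : Set ℝ) with hsdef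
    have hs0 : s 0 = (Ioo (-π) π) ×ˢ (univ : Set ℝ) := by
      simp [hsdef]
    have hsk : ∀ k : ℤ, AEStronglyMeasurable F (volume.restrict (s k)) := by
      intro k
      set c : ℝ × ℝ := ((k:ℝ)*(2*π), (k:ℝ)*(2*π)) with hcdef
      have hτ : MeasurePreserving (· + c) (volume : Measure (ℝ × ℝ)) volume :=
        measurePreserving_add_right volume c
      have hemb : MeasurableEmbedding (· + c : ℝ × ℝ → ℝ × ℝ) :=
        (MeasurableEquiv.addRight c).measurableEmbedding
      have hpre : (· + c : ℝ × ℝ → ℝ × ℝ) ⁻¹' (s k) = s 0 := by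
        ext p
        simp only [hsdef, mem_preimage, mem_prod, mem_Ioo, mem_univ, and_true, hcdef,
          Prod.fst_add, Int.cast_zero, zero_mul, add_zero]
        constructor
        · rintro ⟨h1, h2⟩; constructor <;> linarith
        · rintro ⟨h1, h2⟩; constructor <;> linarith
      have hmp : MeasurePreserving (· + c) (volume.restrict (s 0)) (volume.restrict (s k)) := by
        have h := hτ.restrict_preimage_emb hemb (s k)
        rwa [hpre] at h
      have h0 : AEStronglyMeasurable F (volume.restrict (s 0)) := by
        rw [hs0]
        exact hint.aestronglyMeasurable
      have hcomp : AEStronglyMeasurable (F ∘ (· + c)) (volume.restrict (s 0)) := by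
        have hFc : F ∘ (· + c : ℝ × ℝ → ℝ × ℝ) = F := by
          funext p
          exact hFkey k p
        rw [hFc]; exact h0
      exact (hmp.aestronglyMeasurable_comp_iff hemb).mp hcomp
    have hU : AEStronglyMeasurable F (volume.restrict (⋃ k, s k)) :=
      aestronglyMeasurable_iUnion_iff.mpr hsk
    have hae : ∀ᵐ p : ℝ × ℝ ∂volume, p ∈ ⋃ k, s k := by
      rw [ae_iff]
      have hsub : {p : ℝ × ℝ | ¬ p ∈ ⋃ k, s k} ⊆
          (range (fun k : ℤ => -π + (k:ℝ)*(2*π))) ×ˢ (univ : Set ℝ) := by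
        intro p hp
        simp only [mem_setOf_eq, mem_iUnion, not_exists, hsdef, mem_prod, mem_Ioo, mem_univ,
          and_true, not_and, not_lt] at hp
        simp only [mem_prod, mem_range, mem_univ, and_true]
        set k : ℤ := ⌊(p.1 + π)/(2*π)⌋ with hk
        have h2π : (0:ℝ) < 2*π := by linarith
        have h1 : (k:ℝ) ≤ (p.1 + π)/(2*π) := Int.floor_le _
        have h2 : (p.1 + π)/(2*π) < k + 1 := Int.lt_floor_add_one _
        have h1' : (k:ℝ)*(2*π) ≤ p.1 + π := by
          have := (le_div_iff₀ h2π).mp h1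
          linarith
        have h2' : p.1 + π < ((k:ℝ) + 1)*(2*π) := by
          have := (div_lt_iff₀ h2π).mp h2
          linarith
        have hge : -π + (k:ℝ)*(2*π) ≤ p.1 := by linarith
        have hlt : p.1 < π + (k:ℝ)*(2*π) := by nlinarith
        have hle : p.1 ≤ -π + (k:ℝ)*(2*π) := by
          by_contra hc
          push_neg at hc
          exact absurd (hp k hc) (not_le.mpr hlt)
        exact ⟨k, by linarith⟩
      refine measure_mono_null hsub ?_
      rw [Measure.volume_eq_prod, Measure.prod_prod,
        Set.Countable.measure_zero (countable_range _) volume, zero_mul]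
    rw [← Measure.restrict_eq_self_of_ae_mem hae]
    exact hU
  have hFmeasP : AEStronglyMeasurable F ((volume : Measure ℝ).prod volume) := by
    rwa [← Measure.volume_eq_prod]
  have hH2meas : AEStronglyMeasurable H₂ (μ.prod volume) := by
    have h1 : AEStronglyMeasurable H₂ ((volume : Measure ℝ).prod volume) :=
      hFmeasP.comp_measurePreserving he2L
    have h2 : AEStronglyMeasurable H₂ (volume : Measure (ℝ × ℝ)) := by
      rwa [Measure.volume_eq_prod]
    rw [hρ]
    exact h2.restrict
  have hH1 : Integrable H₁ (μ.prod volume) :=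
    (heμ.integrable_comp_emb e.measurableEmbedding).mpr hF1
  obtain ⟨hs1, hs2⟩ := (integrable_prod_iff' hH1.aestronglyMeasurable).mp hH1
  have hneg : MeasurePreserving (fun t : ℝ => -t) volume volume :=
    Measure.measurePreserving_neg volume
  have hs1' : ∀ᵐ t : ℝ ∂volume, Integrable (fun x => H₁ (x, -t)) μ :=
    hneg.quasiMeasurePreserving.ae hs1
  -- periodicity of the slices
  have hper : ∀ t : ℝ, Function.Periodic (fun x => H₁ (x, -t)) (2*π) := by
    intro t x
    show F (x + 2*π, x + 2*π + -t) = F (x, x + -t)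
    have h := hFkey 1 (x, x + -t)
    simp only [Int.cast_one, one_mul] at h
    rw [show x + 2*π + -t = x + -t + 2*π from by ring]
    exact h
  have hslice_eq : ∀ (t y : ℝ), H₂ (y, t) = H₁ (y + t, -t) := by
    intro t y
    show F (y + t, y) = F (y + t, y + t + -t)
    rw [show y + t + -t = y from by ring]
  -- slicewise integrability of H₂
  have hb : ∀ᵐ t : ℝ ∂volume, Integrable (fun y => H₂ (y, t)) μ := by
    filter_upwards [hs1'] with t ht
    have h := shift_integrableOn (hper t) t ht
    simp only [hslice_eq]
    exact h
  have hc : Integrable (fun t => ∫ y, ‖H₂ (y, t)‖ ∂μ) volume := by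
    have heqn : (fun t => ∫ y, ‖H₂ (y, t)‖ ∂μ) = (fun t => ∫ x, ‖H₁ (x, -t)‖ ∂μ) := by
      funext t
      have hpn : Function.Periodic (fun x => ‖H₁ (x, -t)‖) (2*π) := by
        intro x
        simp only [hper t x]
      rw [hμdef]
      calc ∫ y in Ioo (-π) π, ‖H₂ (y, t)‖ = ∫ y in Ioo (-π) π, ‖H₁ (y + t, -t)‖ := by
            simp only [hslice_eq]
        _ = ∫ x in Ioo (-π) π, ‖H₁ (x, -t)‖ := shift_setIntegral hpn t
    rw [heqn]
    exact (hneg.integrable_comp_emb (MeasurableEquiv.neg ℝ).measurableEmbedding).mpr hs2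
  have hH2 : Integrable H₂ (μ.prod volume) := (integrable_prod_iff' hH2meas).mpr ⟨hb, hc⟩
  have hFρ' : Integrable F ((volume : Measure ℝ).prod μ) :=
    (he2μ.integrable_comp_emb e2.measurableEmbedding).mp hH2
  have heq2 : ∀ t : ℝ, ∫ y, H₂ (y, t) ∂μ = ∫ x, H₁ (x, -t) ∂μ := by
    intro t
    rw [hμdef]
    calc ∫ y in Ioo (-π) π, H₂ (y, t) = ∫ y in Ioo (-π) π, H₁ (y + t, -t) := by
          simp only [hslice_eq]
      _ = ∫ x in Ioo (-π) π, H₁ (x, -t) := shift_setIntegral (hper t) t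
  constructor
  · show Integrable F ((volume : Measure (ℝ × ℝ)).restrict ((univ : Set ℝ) ×ˢ (Ioo (-π) π)))
    rw [← hρ']
    exact hFρ'
  · calc (∫ x in Ioo (-π) π, ∫ y, Φ (u x) (v y) |x - y|)
        = ∫ q, F q ∂(μ.prod volume) := by
          rw [hμdef] at hF1 ⊢
          exact (integral_prod F hF1).symm
      _ = ∫ q, H₁ q ∂(μ.prod volume) := (heμ.integral_comp e.measurableEmbedding F).symm
      _ = ∫ t, ∫ x, H₁ (x, t) ∂μ := integral_prod_symm H₁ hH1
      _ = ∫ t, ∫ x, H₁ (x, -t) ∂μ := (integral_neg_eq_self _ volume).symm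
      _ = ∫ t, ∫ y, H₂ (y, t) ∂μ := by simp only [heq2]
      _ = ∫ q, H₂ q ∂(μ.prod volume) := (integral_prod_symm H₂ hH2).symm
      _ = ∫ q, F q ∂((volume : Measure ℝ).prod μ) :=
          he2μ.integral_comp e2.measurableEmbedding F
      _ = ∫ x, ∫ y, F (x, y) ∂μ := integral_prod F hFρ'
      _ = ∫ x, ∫ y in Ioo (-π) π, Φ (u x) (v y) |x - y| := by rw [hμdef]
end

section
/- Let n ≥ 2, s ∈ (0,1), and define φ(p,q) = ∫_{{w' ∈ ℝ^{n−1}: |w'| < p}} ∫_{{z' ∈ ℝ^{n−1}: |z'| > q}} (1 + |w' − z'|²)^{−(n+s)/2} dz' dw' for nonnegative p, q. Then there exists a constant c₀ > 0 depending only on n such that φ(p,q) ≥ c₀(p^{n−1} − q^{n−1}) − 2c₀ whenever 0 ≤ q ≤ p. -/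
open MeasureTheory Set Real

set_option maxHeartbeats 1000000 in
theorem stmt_2 (n : ℕ) (hn : 2 ≤ n) :
    ∃ c₀ : ℝ, 0 < c₀ ∧ ∀ s : ℝ, 0 < s → s < 1 →
      ∀ p q : ℝ, 0 ≤ q → q ≤ p →
        c₀ * (p ^ (n - 1) - q ^ (n - 1)) - 2 * c₀ ≤
        ∫ w in {w : EuclideanSpace ℝ (Fin (n - 1)) | ‖w‖ < p},
          ∫ z in {z : EuclideanSpace ℝ (Fin (n - 1)) | q < ‖z‖},
            (1 + ‖w - z‖ ^ 2) ^ (-((n : ℝ) + s) / 2) := by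
  classical
  set E := EuclideanSpace ℝ (Fin (n - 1)) with hE
  haveI : Nonempty (Fin (n - 1)) := ⟨⟨0, by omega⟩⟩
  haveI : Nontrivial E := by unfold E; infer_instance
  have hdrank : Module.finrank ℝ E = n - 1 := finrank_euclideanSpace_fin
  set v₁ : ℝ := (volume (Metric.ball (0 : E) 1)).toReal with hv₁
  set vh : ℝ := (volume (Metric.ball (0 : E) (1/2 : ℝ))).toReal with hvh
  have hv₁pos : 0 < v₁ :=
    ENNReal.toReal_pos (Metric.measure_ball_pos volume _ one_pos).ne' measure_ball_lt_top.ne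
  have hvhpos : 0 < vh :=
    ENNReal.toReal_pos (Metric.measure_ball_pos volume _ (by norm_num : (0:ℝ) < 1/2)).ne'
      measure_ball_lt_top.ne
  set c₁ : ℝ := (2 : ℝ) ^ (-(((n : ℝ) + 1) / 2)) * vh with hc₁
  have hc₁pos : 0 < c₁ := mul_pos (rpow_pos_of_pos two_pos _) hvhpos
  refine ⟨c₁ * v₁, mul_pos hc₁pos hv₁pos, ?_⟩
  intro s hs0 hs1 p q hq hqp
  have hp : 0 ≤ p := hq.trans hqp
  set g : E → E → ℝ := fun w z => (1 + ‖w - z‖ ^ 2) ^ (-((n : ℝ) + s) / 2) with hg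
  have hnr : ((Module.finrank ℝ E : ℝ)) < (n : ℝ) + s := by
    rw [hdrank]
    have h1 : ((n - 1 : ℕ) : ℝ) = (n : ℝ) - 1 := by
      push_cast [Nat.cast_sub (by omega : 1 ≤ n)]; ring
    rw [h1]; linarith
  have hint0 : Integrable (fun x : E => (1 + ‖x‖ ^ 2) ^ (-((n : ℝ) + s) / 2)) :=
    integrable_rpow_neg_one_add_norm_sq hnr
  have hint : ∀ w : E, Integrable (fun z : E => g w z) := fun w => hint0.comp_sub_left w
  have hgpos : ∀ w z : E, 0 < g w z := fun w z => rpow_pos_of_pos (by positivity) _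
  set T : Set E := {z : E | q < ‖z‖} with hT
  set A : Set E := {w : E | ‖w‖ < p} \ Metric.closedBall 0 q with hA
  have hBp : {w : E | ‖w‖ < p} = Metric.ball (0 : E) p := by
    ext w; simp [Metric.mem_ball, dist_zero_right]
  have hAmeas : MeasurableSet A := by
    rw [hA, hBp]; exact measurableSet_ball.diff measurableSet_closedBall
  have hAsub : A ⊆ Metric.ball (0 : E) p := by rw [hA, hBp]; exact diff_subset
  -- inner bound
  have hinner : ∀ w : E, q < ‖w‖ → c₁ ≤ ∫ z in T, g w z := by
    intro w hw
    have hw0 : 0 < ‖w‖ := lt_of_le_of_lt hq hw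
    set w' : E := (1 + 1 / (2 * ‖w‖)) • w with hw'
    have hcoef : (0:ℝ) < 1 + 1 / (2 * ‖w‖) := by positivity
    have hw'w : ‖w' - w‖ = 1/2 := by
      have h1 : w' - w = (1 / (2 * ‖w‖)) • w := by rw [hw']; module
      rw [h1, norm_smul, Real.norm_eq_abs, abs_of_pos (by positivity)]
      field_simp
    have hw'n : ‖w'‖ = ‖w‖ + 1/2 := by
      rw [hw', norm_smul, Real.norm_eq_abs, abs_of_pos hcoef]
      field_simp
    have hball_sub : Metric.ball w' (1/2) ⊆ T := by
      intro z hz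
      rw [Metric.mem_ball, dist_comm, dist_eq_norm] at hz
      have h1 : ‖w'‖ - ‖z‖ ≤ ‖w' - z‖ := norm_sub_norm_le _ _
      show q < ‖z‖
      rw [hw'n] at h1
      linarith
    have hbound : ∀ z ∈ Metric.ball w' (1/2), (2:ℝ) ^ (-(((n : ℝ) + 1) / 2)) ≤ g w z := by
      intro z hz
      rw [Metric.mem_ball, dist_comm, dist_eq_norm] at hz
      have h1 : ‖w - z‖ ≤ ‖w - w'‖ + ‖w' - z‖ := norm_sub_le_norm_sub_add_norm_sub _ _ _
      have h2 : ‖w - w'‖ = 1/2 := by rw [norm_sub_rev]; exact hw'w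
      have hbase : 1 + ‖w - z‖ ^ 2 ≤ 2 := by nlinarith [norm_nonneg (w - z)]
      have step1 : (2:ℝ) ^ (-((n : ℝ) + s) / 2) ≤ (1 + ‖w - z‖ ^ 2) ^ (-((n : ℝ) + s) / 2) := by
        apply rpow_le_rpow_of_nonpos (by positivity) hbase
        have hns : (0:ℝ) < (n : ℝ) + s := by positivity
        rw [neg_div]
        simp only [neg_nonpos]
        positivity
      have step2 : (2:ℝ) ^ (-(((n : ℝ) + 1) / 2)) ≤ (2:ℝ) ^ (-((n : ℝ) + s) / 2) := by
        apply (rpow_le_rpow_left_iff (by norm_num : (1:ℝ) < 2)).mpr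
        rw [neg_div]
        apply neg_le_neg
        linarith
      exact step2.trans step1
    calc c₁ = (2:ℝ) ^ (-(((n : ℝ) + 1) / 2)) * (volume (Metric.ball w' (1/2))).toReal := by
            rw [hc₁, hvh, Measure.addHaar_ball_center volume w']
      _ ≤ ∫ z in Metric.ball w' (1/2), g w z :=
            setIntegral_ge_of_const_le_real measurableSet_ball measure_ball_lt_top.ne
              hbound ((hint w).integrableOn)
      _ ≤ ∫ z in T, g w z :=
            setIntegral_mono_set ((hint w).integrableOn)
              (ae_of_all _ fun z => (hgpos w z).le)
              (HasSubset.Subset.eventuallyLE hball_sub)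
  -- outer
  have hcont : Continuous (fun pz : E × E => g pz.1 pz.2) := by
    apply Continuous.rpow_const
    · fun_prop
    · intro x; left; positivity
  have hsm : StronglyMeasurable (fun w : E => ∫ z in T, g w z) :=
    StronglyMeasurable.integral_prod_right hcont.stronglyMeasurable
  set F : E → ℝ := fun w => ∫ z in T, g w z with hF
  have hFnonneg : ∀ w, 0 ≤ F w := fun w => integral_nonneg fun z => (hgpos w z).le
  set C : ℝ := ∫ z : E, (1 + ‖z‖ ^ 2) ^ (-((n : ℝ) + s) / 2) with hC
  have hFle : ∀ w, F w ≤ C := by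
    intro w
    have h1 : F w ≤ ∫ z : E, g w z :=
      setIntegral_le_integral (hint w) (ae_of_all _ fun z => (hgpos w z).le)
    have h2 : (∫ z : E, g w z) = C := integral_sub_left_eq_self (fun x : E => (1 + ‖x‖ ^ 2) ^ (-((n : ℝ) + s) / 2)) volume w
    linarith
  have hFint : IntegrableOn F (Metric.ball (0:E) p) := by
    apply Integrable.mono' (g := fun _ => C)
      (integrableOn_const measure_ball_lt_top.ne)
      hsm.aestronglyMeasurable.restrict
    exact ae_of_all _ fun w => by
      rw [Real.norm_eq_abs, abs_of_nonneg (hFnonneg w)]; exact hFle w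
  have hAq : ∀ w ∈ A, q < ‖w‖ := by
    intro w hw
    by_contra h
    push_neg at h
    exact hw.2 (by simpa [Metric.mem_closedBall, dist_zero_right] using h)
  have hAfin : volume A ≠ ⊤ := (lt_of_le_of_lt (measure_mono hAsub) measure_ball_lt_top).ne
  have step_outer : c₁ * (volume A).toReal ≤ ∫ w in {w : E | ‖w‖ < p}, F w := by
    have h1 : c₁ * (volume A).toReal ≤ ∫ w in A, F w :=
      setIntegral_ge_of_const_le_real hAmeas hAfin
        (fun w hw => hinner w (hAq w hw)) (hFint.mono_set hAsub)
    have h2 : (∫ w in A, F w) ≤ ∫ w in Metric.ball (0:E) p, F w :=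
      setIntegral_mono_set hFint (ae_of_all _ fun w => hFnonneg w)
        (HasSubset.Subset.eventuallyLE hAsub)
    rw [hBp]
    linarith
  -- volume computations
  have hvolball : (volume (Metric.ball (0:E) p)).toReal = p ^ (n-1) * v₁ := by
    rw [Measure.addHaar_ball _ _ hp, hdrank, ENNReal.toReal_mul,
      ENNReal.toReal_ofReal (pow_nonneg hp _)]
  have hvolcb : (volume (Metric.closedBall (0:E) q)).toReal = q ^ (n-1) * v₁ := by
    rw [Measure.addHaar_closedBall _ _ hq, hdrank, ENNReal.toReal_mul,
      ENNReal.toReal_ofReal (pow_nonneg hq _)]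
  have hcover : Metric.ball (0:E) p ⊆ A ∪ Metric.closedBall 0 q := by
    intro w hw
    by_cases h : w ∈ Metric.closedBall (0:E) q
    · exact Or.inr h
    · exact Or.inl ⟨by rwa [hBp], h⟩
  have hkey : p ^ (n-1) * v₁ ≤ (volume A).toReal + q ^ (n-1) * v₁ := by
    rw [← hvolball, ← hvolcb]
    have hle : volume (Metric.ball (0:E) p) ≤ volume A + volume (Metric.closedBall (0:E) q) :=
      (measure_mono hcover).trans (measure_union_le A (Metric.closedBall 0 q))
    calc (volume (Metric.ball (0:E) p)).toReal
        ≤ (volume A + volume (Metric.closedBall (0:E) q)).toReal :=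
          ENNReal.toReal_mono
            (ENNReal.add_ne_top.mpr ⟨hAfin, measure_closedBall_lt_top.ne⟩) hle
      _ = (volume A).toReal + (volume (Metric.closedBall (0:E) q)).toReal :=
          ENNReal.toReal_add hAfin measure_closedBall_lt_top.ne
  have hfinal : c₁ * v₁ * (p ^ (n-1) - q ^ (n-1)) - 2 * (c₁ * v₁) ≤ c₁ * (volume A).toReal := by
    have h2 := mul_le_mul_of_nonneg_left hkey hc₁pos.le
    nlinarith [mul_pos hc₁pos hv₁pos]
  exact hfinal.trans step_outer
end

section
/- For n ≥ 2 and s ∈ (0,1), let B_r ⊂ ℝⁿ denote the ball of radius r centered at the origin, with 0 < r < π. Then ∫_{B_r} ∫_{ℝⁿ \ B_r} |x − y|^{−(n+s)} dy dx ≤ (C_n / (s(1−s))) · r^{n−s} for some constant C_n depending only on n. -/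
open MeasureTheory Set Real Metric

/-! Auxiliary transfer lemma: integrability of radial functions w.r.t. an additive Haar
measure follows from 1-dimensional integrability of the radially weighted profile. -/

section Aux

variable {E : Type*} [NormedAddCommGroup E] [NormedSpace ℝ E] [MeasurableSpace E]
  [BorelSpace E] [Nontrivial E] [FiniteDimensional ℝ E]

lemma my_integrable_fun_norm_addHaar (μ : Measure E) [μ.IsAddHaarMeasure] {f : ℝ → ℝ}
    (hf_meas : Measurable f)
    (hf : IntegrableOn (fun y : ℝ => y ^ (Module.finrank ℝ E - 1) * f y) (Ioi (0:ℝ))) :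
    Integrable (fun x : E => f ‖x‖) μ := by
  set d := Module.finrank ℝ E - 1 with hd
  have hν : Integrable (fun x : Ioi (0:ℝ) => f x.1) (Measure.volumeIoiPow d) := by
    rw [Measure.volumeIoiPow, integrable_withDensity_iff
      ((measurable_subtype_coe.pow_const d).ennreal_ofReal)
      (Filter.Eventually.of_forall fun _ => ENNReal.ofReal_lt_top)]
    have heq : (fun x : Ioi (0:ℝ) => f x.1 * (ENNReal.ofReal (x.1 ^ d)).toReal)
        = (fun y : ℝ => f y * (ENNReal.ofReal (y ^ d)).toReal) ∘ Subtype.val := rfl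
    rw [heq, ← (MeasurableEmbedding.subtype_coe measurableSet_Ioi).integrable_map_iff,
      map_comap_subtype_coe measurableSet_Ioi]
    refine hf.congr_fun (fun y hy => ?_) measurableSet_Ioi
    rw [ENNReal.toReal_ofReal (pow_nonneg (le_of_lt hy) d), mul_comm]
  have hprod : Integrable ((fun y : ℝ => f y) ∘ Subtype.val ∘ Prod.snd)
      (μ.toSphere.prod (Measure.volumeIoiPow d)) := by
    have h1 : Integrable (fun x : Ioi (0:ℝ) => f x.1)
        (μ.toSphere univ • Measure.volumeIoiPow d) :=
      hν.smul_measure (measure_ne_top _ _)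
    rw [← Measure.map_snd_prod] at h1
    exact (integrable_map_measure
      ((hf_meas.comp measurable_subtype_coe).aestronglyMeasurable)
      measurable_snd.aemeasurable).mp h1
  have hcomap : Integrable (fun x : ({0}ᶜ : Set E) => f ‖x.1‖) (Measure.comap Subtype.val μ) :=
    ((μ.measurePreserving_homeomorphUnitSphereProd).integrable_comp_emb
      (Homeomorph.measurableEmbedding _)).mpr hprod |>.congr
      (Filter.Eventually.of_forall fun x => by simp [homeomorphUnitSphereProd_apply_snd_coe])
  have hres : IntegrableOn (fun x : E => f ‖x‖) ({0}ᶜ) μ := by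
    rw [IntegrableOn, ← map_comap_subtype_coe (MeasurableSet.compl (measurableSet_singleton 0)),
      (MeasurableEmbedding.subtype_coe
        (MeasurableSet.compl (measurableSet_singleton 0))).integrable_map_iff]
    exact hcomap
  rwa [IntegrableOn, restrict_compl_singleton _] at hres

end Aux

/-! One-dimensional lemmas for the inner ("far away") integral. -/

lemma my_pt {n : ℕ} (hn : 1 ≤ n) {s y : ℝ} (hy : 0 < y) :
    y ^ (n - 1) * y ^ (-((n : ℝ) + s)) = y ^ (-1 - s) := by
  rw [← Real.rpow_natCast y (n - 1), ← Real.rpow_add hy, Nat.cast_sub hn, Nat.cast_one]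
  congr 1; ring

lemma my_inner_1d_integrable {n : ℕ} (hn : 1 ≤ n) {s δ : ℝ} (hs : 0 < s) (hδ : 0 < δ) :
    IntegrableOn
      (fun y : ℝ => y ^ (n - 1) * (Ici δ).indicator (fun t => t ^ (-((n : ℝ) + s))) y)
      (Ioi (0 : ℝ)) := by
  have hind : (fun y : ℝ => y ^ (n - 1) * (Ici δ).indicator (fun t => t ^ (-((n : ℝ) + s))) y)
      = (Ici δ).indicator (fun y => y ^ (n - 1) * y ^ (-((n : ℝ) + s))) := by
    funext y; by_cases h : y ∈ Ici δ <;> simp [indicator_apply, h]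
  rw [hind, IntegrableOn, integrable_indicator_iff measurableSet_Ici, IntegrableOn,
    Measure.restrict_restrict measurableSet_Ici,
    show Ici δ ∩ Ioi 0 = Ici δ from
      inter_eq_self_of_subset_left (fun y (hy : δ ≤ y) => lt_of_lt_of_le hδ hy),
    ← Measure.restrict_congr_set Ioi_ae_eq_Ici]
  exact (integrableOn_Ioi_rpow_of_lt (by linarith) hδ).congr_fun
    (fun y hy => (my_pt hn (hδ.trans hy)).symm) measurableSet_Ioi

lemma my_inner_1d_value {n : ℕ} (hn : 1 ≤ n) {s δ : ℝ} (hs : 0 < s) (hδ : 0 < δ) :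
    ∫ y in Ioi (0 : ℝ), y ^ (n - 1) • (Ici δ).indicator (fun t => t ^ (-((n : ℝ) + s))) y
      = δ ^ (-s) / s := by
  have hind : (fun y : ℝ => y ^ (n - 1) • (Ici δ).indicator (fun t => t ^ (-((n : ℝ) + s))) y)
      = (Ici δ).indicator (fun y => y ^ (n - 1) * y ^ (-((n : ℝ) + s))) := by
    funext y; by_cases h : y ∈ Ici δ <;> simp [indicator_apply, h]
  rw [hind, setIntegral_indicator measurableSet_Ici,
    show Ioi 0 ∩ Ici δ = Ici δ from
      inter_eq_self_of_subset_right (fun y (hy : δ ≤ y) => lt_of_lt_of_le hδ hy),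
    ← setIntegral_congr_set Ioi_ae_eq_Ici,
    setIntegral_congr_fun measurableSet_Ioi (fun y hy => my_pt hn (hδ.trans hy)),
    integral_Ioi_rpow_of_lt (by linarith) hδ]
  rw [show -1 - s + 1 = -s by ring, neg_div_neg_eq]

/-! One-dimensional lemmas for the outer integral. -/

lemma my_outer_1d {n : ℕ} {s r : ℝ} (hs0 : 0 < s) (hs1 : s < 1) (hr : 0 < r) :
    IntegrableOn (fun y : ℝ => y ^ (n - 1) * (r - y) ^ (-s)) (Ioo (0:ℝ) r) ∧
    ∫ y in Ioo (0:ℝ) r, y ^ (n - 1) * (r - y) ^ (-s)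
      ≤ r ^ (n - 1) * (r ^ (1 - s) / (1 - s)) := by
  have hbase : IntegrableOn (fun y : ℝ => (r - y) ^ (-s)) (Ioo (0:ℝ) r) := by
    have h1 := (intervalIntegral.intervalIntegrable_rpow' (a := 0) (b := r) (r := -s)
      (by linarith)).comp_sub_left r
    rw [sub_zero, sub_self] at h1
    have h2 := h1.symm
    rw [intervalIntegrable_iff_integrableOn_Ioc_of_le hr.le] at h2
    exact h2.mono_set Ioo_subset_Ioc_self
  have hmeas : AEStronglyMeasurable (fun y : ℝ => y ^ (n - 1) * (r - y) ^ (-s))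
      (volume.restrict (Ioo (0:ℝ) r)) := by
    apply Measurable.aestronglyMeasurable; fun_prop
  have hptb : ∀ y ∈ Ioo (0:ℝ) r,
      y ^ (n - 1) * (r - y) ^ (-s) ≤ r ^ (n - 1) * (r - y) ^ (-s) := fun y hy =>
    mul_le_mul_of_nonneg_right (pow_le_pow_left₀ hy.1.le hy.2.le _)
      (Real.rpow_nonneg (by linarith [hy.2]) _)
  have hint : IntegrableOn (fun y : ℝ => y ^ (n - 1) * (r - y) ^ (-s)) (Ioo (0:ℝ) r) := by
    refine Integrable.mono' (hbase.const_mul (r ^ (n - 1))) hmeas ?_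
    filter_upwards [ae_restrict_mem measurableSet_Ioo] with y hy
    rw [Real.norm_eq_abs, abs_mul, abs_of_nonneg (pow_nonneg hy.1.le _),
      abs_of_nonneg (Real.rpow_nonneg (by linarith [hy.2]) _)]
    exact hptb y hy
  refine ⟨hint, ?_⟩
  have hval : ∫ y in Ioo (0:ℝ) r, (r - y) ^ (-s) = r ^ (1 - s) / (1 - s) := by
    rw [setIntegral_congr_set Ioo_ae_eq_Ioc, ← intervalIntegral.integral_of_le hr.le,
      intervalIntegral.integral_comp_sub_left (fun t : ℝ => t ^ (-s)) r,
      sub_zero, sub_self, integral_rpow (Or.inl (by linarith)),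
      Real.zero_rpow (by linarith : -s + 1 ≠ 0), sub_zero,
      show -s + 1 = 1 - s by ring]
  calc ∫ y in Ioo (0:ℝ) r, y ^ (n - 1) * (r - y) ^ (-s)
      ≤ ∫ y in Ioo (0:ℝ) r, r ^ (n - 1) * (r - y) ^ (-s) :=
        setIntegral_mono_on hint (hbase.const_mul _) measurableSet_Ioo hptb
    _ = r ^ (n - 1) * (r ^ (1 - s) / (1 - s)) := by
        rw [integral_const_mul, hval]

/-! Lemmas at the level of the normed space `E`. -/

section ELevel

variable {E : Type*} [NormedAddCommGroup E] [NormedSpace ℝ E] [MeasurableSpace E]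
  [BorelSpace E] [Nontrivial E] [FiniteDimensional ℝ E]
  (μ : Measure E) [μ.IsAddHaarMeasure]

omit [NormedSpace ℝ E] [MeasurableSpace E] [BorelSpace E] [Nontrivial E]
  [FiniteDimensional ℝ E] in
lemma my_indicator_inner {n : ℕ} (s δ : ℝ) :
    (fun y : E => (Ici δ).indicator (fun t => t ^ (-((n : ℝ) + s))) ‖y‖)
      = ((ball (0 : E) δ)ᶜ).indicator (fun y => ‖y‖ ^ (-((n : ℝ) + s))) := by
  funext y
  by_cases h : δ ≤ ‖y‖ <;>
    simp [indicator_apply, mem_ball, dist_zero_right, h, not_lt.mpr, not_lt]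

omit [NormedSpace ℝ E] [MeasurableSpace E] [BorelSpace E] [Nontrivial E]
  [FiniteDimensional ℝ E] in
lemma my_indicator_outer (s r : ℝ) :
    (fun x : E => (Iio r).indicator (fun t => (r - t) ^ (-s)) ‖x‖)
      = (ball (0 : E) r).indicator (fun x => (r - ‖x‖) ^ (-s)) := by
  funext x
  by_cases h : ‖x‖ < r <;>
    simp [indicator_apply, mem_ball, dist_zero_right, h, not_lt]

lemma my_inner_integrableOn {s δ : ℝ} (hs : 0 < s) (hδ : 0 < δ) :
    IntegrableOn (fun y : E => ‖y‖ ^ (-((Module.finrank ℝ E : ℝ) + s)))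
      ((ball (0:E) δ)ᶜ) μ := by
  have hn : 1 ≤ Module.finrank ℝ E := Module.finrank_pos
  have hint : Integrable
      (fun y : E => (Ici δ).indicator
        (fun t => t ^ (-((Module.finrank ℝ E : ℝ) + s))) ‖y‖) μ :=
    my_integrable_fun_norm_addHaar μ
      ((by fun_prop : Measurable fun t : ℝ => t ^ (-((Module.finrank ℝ E : ℝ) + s))).indicator
        measurableSet_Ici)
      (my_inner_1d_integrable hn hs hδ)
  rw [my_indicator_inner] at hint
  rwa [integrable_indicator_iff measurableSet_ball.compl] at hint

lemma my_inner_value {s δ : ℝ} (hs : 0 < s) (hδ : 0 < δ) :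
    ∫ y in (ball (0:E) δ)ᶜ, ‖y‖ ^ (-((Module.finrank ℝ E : ℝ) + s)) ∂μ
      = (Module.finrank ℝ E : ℝ) * (μ (ball 0 1)).toReal * (δ ^ (-s) / s) := by
  have hn : 1 ≤ Module.finrank ℝ E := Module.finrank_pos
  rw [← integral_indicator measurableSet_ball.compl, ← my_indicator_inner,
    integral_fun_norm_addHaar μ
      (fun t : ℝ => (Ici δ).indicator (fun t => t ^ (-((Module.finrank ℝ E : ℝ) + s))) t),
    my_inner_1d_value hn hs hδ, nsmul_eq_mul, smul_eq_mul, mul_assoc]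
  rfl

lemma my_outer_integrableOn {s r : ℝ} (hs0 : 0 < s) (hs1 : s < 1) (hr : 0 < r) :
    IntegrableOn (fun x : E => (r - ‖x‖) ^ (-s)) (ball (0:E) r) μ := by
  have hint : Integrable
      (fun x : E => (Iio r).indicator (fun t => (r - t) ^ (-s)) ‖x‖) μ := by
    refine my_integrable_fun_norm_addHaar μ
      ((by fun_prop : Measurable fun t : ℝ => (r - t) ^ (-s)).indicator measurableSet_Iio) ?_
    have hind : (fun y : ℝ => y ^ (Module.finrank ℝ E - 1)
          * (Iio r).indicator (fun t => (r - t) ^ (-s)) y)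
        = (Iio r).indicator (fun y => y ^ (Module.finrank ℝ E - 1) * (r - y) ^ (-s)) := by
      funext y; by_cases h : y ∈ Iio r <;> simp [indicator_apply, h]
    rw [hind, IntegrableOn, integrable_indicator_iff measurableSet_Iio, IntegrableOn,
      Measure.restrict_restrict measurableSet_Iio, inter_comm, Ioi_inter_Iio]
    exact (my_outer_1d hs0 hs1 hr).1
  rw [my_indicator_outer] at hint
  rwa [integrable_indicator_iff measurableSet_ball] at hint

lemma my_outer_bound {s r : ℝ} (hs0 : 0 < s) (hs1 : s < 1) (hr : 0 < r) :
    ∫ x in ball (0:E) r, (r - ‖x‖) ^ (-s) ∂μ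
      ≤ (Module.finrank ℝ E : ℝ) * ((μ (ball 0 1)).toReal
          * (r ^ (Module.finrank ℝ E - 1) * (r ^ (1 - s) / (1 - s)))) := by
  rw [← integral_indicator measurableSet_ball, ← my_indicator_outer,
    integral_fun_norm_addHaar μ (fun t : ℝ => (Iio r).indicator (fun t => (r - t) ^ (-s)) t),
    nsmul_eq_mul, smul_eq_mul]
  have hval : ∫ y in Ioi (0:ℝ), y ^ (Module.finrank ℝ E - 1)
        • (Iio r).indicator (fun t => (r - t) ^ (-s)) y
      = ∫ y in Ioo (0:ℝ) r, y ^ (Module.finrank ℝ E - 1) * (r - y) ^ (-s) := by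
    have hind : (fun y : ℝ => y ^ (Module.finrank ℝ E - 1)
          • (Iio r).indicator (fun t => (r - t) ^ (-s)) y)
        = (Iio r).indicator (fun y => y ^ (Module.finrank ℝ E - 1) * (r - y) ^ (-s)) := by
      funext y; by_cases h : y ∈ Iio r <;> simp [indicator_apply, h]
    rw [hind, setIntegral_indicator measurableSet_Iio, Ioi_inter_Iio]
  rw [hval]
  exact mul_le_mul_of_nonneg_left
    (mul_le_mul_of_nonneg_left (my_outer_1d hs0 hs1 hr).2 ENNReal.toReal_nonneg)
    (Nat.cast_nonneg _)

end ELevel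

theorem stmt_9 (n : ℕ) (hn : 2 ≤ n) :
    ∃ C : ℝ, 0 < C ∧ ∀ s : ℝ, 0 < s → s < 1 → ∀ r : ℝ, 0 < r → r < π →
      (∫ x in Metric.ball (0 : EuclideanSpace ℝ (Fin n)) r,
        ∫ y in (Metric.ball (0 : EuclideanSpace ℝ (Fin n)) r)ᶜ,
          ‖x - y‖ ^ (-((n : ℝ) + s))) ≤
      C / (s * (1 - s)) * r ^ ((n : ℝ) - s) := by
  haveI : NeZero n := ⟨by omega⟩
  haveI : Nontrivial (EuclideanSpace ℝ (Fin n)) := inferInstance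
  have hfr : Module.finrank ℝ (EuclideanSpace ℝ (Fin n)) = n := finrank_euclideanSpace_fin
  set κ : ℝ := (volume (ball (0 : EuclideanSpace ℝ (Fin n)) 1)).toReal with hκdef
  have hκpos : 0 < κ :=
    ENNReal.toReal_pos (measure_ball_pos volume _ one_pos).ne' measure_ball_lt_top.ne
  have hnpos : (0:ℝ) < n := by positivity
  refine ⟨((n : ℝ) * κ) ^ 2, by positivity, ?_⟩
  intro s hs0 hs1 r hr _
  have h1s : 0 < 1 - s := by linarith
  have key : ∀ x ∈ ball (0 : EuclideanSpace ℝ (Fin n)) r,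
      (∫ y in (ball (0 : EuclideanSpace ℝ (Fin n)) r)ᶜ, ‖x - y‖ ^ (-((n : ℝ) + s)))
        ≤ (n : ℝ) * κ * ((r - ‖x‖) ^ (-s) / s) := by
    intro x hx
    rw [mem_ball, dist_zero_right] at hx
    have hδ : 0 < r - ‖x‖ := by linarith
    set δ := r - ‖x‖ with hδdef
    have hiInt : IntegrableOn
        (fun y : EuclideanSpace ℝ (Fin n) => ‖y‖ ^ (-((n : ℝ) + s)))
        ((ball (0 : EuclideanSpace ℝ (Fin n)) δ)ᶜ) volume := by
      have := my_inner_integrableOn (volume : Measure (EuclideanSpace ℝ (Fin n))) hs0 hδ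
      rwa [hfr] at this
    have hiVal : ∫ y in (ball (0 : EuclideanSpace ℝ (Fin n)) δ)ᶜ,
        ‖y‖ ^ (-((n : ℝ) + s)) = (n : ℝ) * κ * (δ ^ (-s) / s) := by
      have := my_inner_value (volume : Measure (EuclideanSpace ℝ (Fin n))) hs0 hδ
      rwa [hfr] at this
    have hmp : MeasurePreserving (fun y : EuclideanSpace ℝ (Fin n) => x - y) volume volume :=
      Measure.measurePreserving_sub_left volume x
    have hemb : MeasurableEmbedding (fun y : EuclideanSpace ℝ (Fin n) => x - y) :=
      (MeasurableEquiv.subLeft x).measurableEmbedding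
    have hseteq : (fun y : EuclideanSpace ℝ (Fin n) => x - y) ⁻¹'
        ((ball (0 : EuclideanSpace ℝ (Fin n)) δ)ᶜ) = (ball x δ)ᶜ := by
      ext y
      simp only [mem_preimage, mem_compl_iff, mem_ball, dist_zero_right, dist_eq_norm, sub_zero,
        norm_sub_rev x y]
    have hint2 : IntegrableOn (fun y : EuclideanSpace ℝ (Fin n) => ‖x - y‖ ^ (-((n : ℝ) + s)))
        ((ball x δ)ᶜ) volume := by
      have h := ((hmp.restrict_preimage_emb hemb
        ((ball (0 : EuclideanSpace ℝ (Fin n)) δ)ᶜ)).integrable_comp_emb hemb).mpr hiInt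
      rw [hseteq] at h
      exact h
    have hval2 : (∫ y in (ball x δ)ᶜ, ‖x - y‖ ^ (-((n : ℝ) + s)))
        = ∫ z in (ball (0 : EuclideanSpace ℝ (Fin n)) δ)ᶜ, ‖z‖ ^ (-((n : ℝ) + s)) := by
      rw [← hseteq]
      exact hmp.setIntegral_preimage_emb hemb (fun z => ‖z‖ ^ (-((n : ℝ) + s))) _
    have hsub : (ball (0 : EuclideanSpace ℝ (Fin n)) r)ᶜ ⊆ (ball x δ)ᶜ := by
      apply compl_subset_compl.mpr
      apply ball_subset_ball'
      rw [dist_zero_right]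
      linarith
    calc (∫ y in (ball (0 : EuclideanSpace ℝ (Fin n)) r)ᶜ, ‖x - y‖ ^ (-((n : ℝ) + s)))
        ≤ ∫ y in (ball x δ)ᶜ, ‖x - y‖ ^ (-((n : ℝ) + s)) := by
          refine setIntegral_mono_set hint2 ?_ (HasSubset.Subset.eventuallyLE hsub)
          exact Filter.Eventually.of_forall fun y => Real.rpow_nonneg (norm_nonneg _) _
      _ = (n : ℝ) * κ * (δ ^ (-s) / s) := by rw [hval2, hiVal]
  have houterInt : IntegrableOn (fun x : EuclideanSpace ℝ (Fin n) => (r - ‖x‖) ^ (-s))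
      (ball (0 : EuclideanSpace ℝ (Fin n)) r) volume :=
    my_outer_integrableOn volume hs0 hs1 hr
  have houterBd : ∫ x in ball (0 : EuclideanSpace ℝ (Fin n)) r, (r - ‖x‖) ^ (-s)
      ≤ (n : ℝ) * (κ * (r ^ (n - 1) * (r ^ (1 - s) / (1 - s)))) := by
    have := my_outer_bound (volume : Measure (EuclideanSpace ℝ (Fin n))) hs0 hs1 hr
    rwa [hfr] at this
  have hmain : (∫ x in ball (0 : EuclideanSpace ℝ (Fin n)) r,
        ∫ y in (ball (0 : EuclideanSpace ℝ (Fin n)) r)ᶜ, ‖x - y‖ ^ (-((n : ℝ) + s)))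
      ≤ ∫ x in ball (0 : EuclideanSpace ℝ (Fin n)) r,
          ((n : ℝ) * κ / s) * (r - ‖x‖) ^ (-s) := by
    refine integral_mono_of_nonneg ?_ (houterInt.const_mul _) ?_
    · exact Filter.Eventually.of_forall fun x =>
        integral_nonneg fun y => Real.rpow_nonneg (norm_nonneg _) _
    · filter_upwards [ae_restrict_mem measurableSet_ball] with x hx
      calc (∫ y in (ball (0 : EuclideanSpace ℝ (Fin n)) r)ᶜ, ‖x - y‖ ^ (-((n : ℝ) + s)))
          ≤ (n : ℝ) * κ * ((r - ‖x‖) ^ (-s) / s) := key x hx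
        _ = ((n : ℝ) * κ / s) * (r - ‖x‖) ^ (-s) := by ring
  have hrpow : (r : ℝ) ^ (n - 1) * r ^ (1 - s) = r ^ ((n : ℝ) - s) := by
    rw [← Real.rpow_natCast r (n - 1), Nat.cast_sub (by omega : 1 ≤ n), Nat.cast_one,
      ← Real.rpow_add hr]
    congr 1; ring
  calc (∫ x in ball (0 : EuclideanSpace ℝ (Fin n)) r,
        ∫ y in (ball (0 : EuclideanSpace ℝ (Fin n)) r)ᶜ, ‖x - y‖ ^ (-((n : ℝ) + s)))
      ≤ ∫ x in ball (0 : EuclideanSpace ℝ (Fin n)) r,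
          ((n : ℝ) * κ / s) * (r - ‖x‖) ^ (-s) := hmain
    _ = ((n : ℝ) * κ / s) * ∫ x in ball (0 : EuclideanSpace ℝ (Fin n)) r,
          (r - ‖x‖) ^ (-s) := integral_const_mul _ _
    _ ≤ ((n : ℝ) * κ / s) * ((n : ℝ) * (κ * (r ^ (n - 1) * (r ^ (1 - s) / (1 - s))))) :=
        mul_le_mul_of_nonneg_left houterBd (by positivity)
    _ = ((n : ℝ) * κ) ^ 2 / (s * (1 - s)) * (r ^ (n - 1) * r ^ (1 - s)) := by
        field_simp
    _ = ((n : ℝ) * κ) ^ 2 / (s * (1 - s)) * r ^ ((n : ℝ) - s) := by rw [hrpow]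
end

section
/- For s ∈ (0,1), let G(t) = ∫₀^t (t−τ)(1+τ²)^{−(2+s)/2} dτ. Then for all real p ≥ 0 and q ≥ 0: 2·(2G'(+∞)·p + G(p−q) − G(p+q)) = ∫_{−p}^{p} ( ∫_{−∞}^{−q} (1+(z−w)²)^{−(2+s)/2} dz + ∫_q^{+∞} (1+(z−w)²)^{−(2+s)/2} dz ) dw, where G'(+∞) = ∫₀^∞ (1+τ²)^{−(2+s)/2} dτ. -/
/-! With `F t = ∫₀^t f` for the even kernel `f τ = (1 + τ²)^(-(2+s)/2)`, translating (and, for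
the left tail, reflecting) shows that the two tail integrals are `A - F (q + w)` and
`A - F (q - w)`. Integrating over `w ∈ (-p, p)` gives `4 A p - 2 ∫_{q-p}^{q+p} F`. Integration by
parts gives `G t = ∫₀^t F`, and `G` is even because `F` is odd, so
`∫_{q-p}^{q+p} F = G (p + q) - G (p - q)`. -/

open MeasureTheory Set Real intervalIntegral

section

variable {E : Type*} [NormedAddCommGroup E] [NormedSpace ℝ E] {f : ℝ → E}

theorem integral_Ioi_comp_sub_right (f : ℝ → E) (c d : ℝ) :
    ∫ x in Ioi c, f (x - d) = ∫ x in Ioi (c - d), f x := by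
  have h := (measurePreserving_sub_right volume d).setIntegral_preimage_emb
    (Homeomorph.subRight d).measurableEmbedding f (Ioi (c - d))
  simpa using h

theorem integral_Ioi_eq_sub_primitive (hf : Integrable f) (b : ℝ) :
    ∫ x in Ioi b, f x = (∫ x in Ioi 0, f x) - ∫ x in 0..b, f x :=
  eq_sub_of_add_eq' (integral_interval_add_Ioi hf.integrableOn hf.integrableOn)

theorem integral_zero_neg_eq_neg_integral_comp_neg (f : ℝ → E) (x : ℝ) :
    ∫ t in 0..-x, f t = -∫ t in 0..x, f (-t) := by
  rw [integral_comp_neg, neg_zero, integral_symm]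

theorem Function.Even.odd_primitive (hf : f.Even) : Function.Odd fun x ↦ ∫ t in 0..x, f t := by
  intro x
  simp only [integral_zero_neg_eq_neg_integral_comp_neg, hf _]

theorem Function.Odd.even_primitive (hf : f.Odd) : Function.Even fun x ↦ ∫ t in 0..x, f t := by
  intro x
  simp only [integral_zero_neg_eq_neg_integral_comp_neg, hf _, intervalIntegral.integral_neg,
    neg_neg]

theorem Function.Even.integral_Iio_comp_sub_right (hf : f.Even) (c d : ℝ) :
    ∫ x in Iio c, f (x - d) = ∫ x in Ioi (d - c), f x := by
  have hneg := integral_comp_neg_Ioi (-c) fun x ↦ f (x - d)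
  rw [neg_neg] at hneg
  rw [← integral_Iic_eq_integral_Iio, ← hneg]
  have hflip : ∀ x, f (-x - d) = f (x - -d) := fun x ↦ by rw [← hf]; congr 1; ring
  simp only [hflip, integral_Ioi_comp_sub_right, neg_sub_neg]

theorem integral_comp_add_add_comp_sub {g : ℝ → E} {p q : ℝ}
    (hg : IntervalIntegrable g volume (q - p) (q + p)) :
    ∫ w in -p..p, (g (q + w) + g (q - w)) = (2 : ℝ) • ∫ u in (q - p)..(q + p), g u := by
  have h₁ : IntervalIntegrable (fun w ↦ g (q + w)) volume (-p) p := by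
    simpa [sub_eq_add_neg] using hg.comp_add_left q
  have h₂ : IntervalIntegrable (fun w ↦ g (q - w)) volume (-p) p := by
    simpa [sub_eq_add_neg, add_comm] using (hg.comp_sub_left q).symm
  rw [integral_add h₁ h₂, integral_comp_add_left, integral_comp_sub_left, sub_neg_eq_add,
    ← sub_eq_add_neg, integral_symm (q + p), two_smul]

end

section

variable {f : ℝ → ℝ}

theorem integral_sub_mul_eq_integral_primitive (hf : Continuous f) (t : ℝ) :
    ∫ τ in 0..t, (t - τ) * f τ = ∫ u in 0..t, ∫ τ in 0..u, f τ := by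
  have h := integral_mul_deriv_eq_deriv_mul (a := 0) (b := t)
    (u := fun τ ↦ t - τ) (u' := fun _ ↦ -1) (v := fun u ↦ ∫ τ in 0..u, f τ) (v' := f)
    (fun x _ ↦ by simpa using (hasDerivAt_id x).const_sub t)
    (fun x _ ↦ (hf.integral_hasStrictDerivAt 0 x).hasDerivAt)
    intervalIntegrable_const (hf.intervalIntegrable _ _)
  simpa using h

theorem integral_tails_comp_sub (hf_even : f.Even) (hf_int : Integrable f) (q w : ℝ) :
    (∫ z in Iio (-q), f (z - w)) + ∫ z in Ioi q, f (z - w) =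
      2 * (∫ x in Ioi 0, f x) - ((∫ t in 0..(q + w), f t) + ∫ t in 0..(q - w), f t) := by
  rw [hf_even.integral_Iio_comp_sub_right, integral_Ioi_comp_sub_right, sub_neg_eq_add,
    add_comm w q, integral_Ioi_eq_sub_primitive hf_int (q + w),
    integral_Ioi_eq_sub_primitive hf_int (q - w)]
  ring

theorem integral_Ioo_integral_tails_comp_sub (hf_cont : Continuous f) (hf_even : f.Even)
    (hf_int : Integrable f) {p : ℝ} (hp : 0 ≤ p) (q : ℝ) :
    ∫ w in Ioo (-p) p, ((∫ z in Iio (-q), f (z - w)) + ∫ z in Ioi q, f (z - w)) =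
      2 * (2 * (∫ x in Ioi 0, f x) * p + (∫ τ in 0..(p - q), (p - q - τ) * f τ) -
        ∫ τ in 0..(p + q), (p + q - τ) * f τ) := by
  have hF : Continuous fun x ↦ ∫ t in 0..x, f t :=
    continuous_primitive (fun _ _ ↦ hf_cont.intervalIntegrable _ _) 0
  have hG_even : ∀ x, (∫ u in 0..-x, ∫ t in 0..u, f t) = ∫ u in 0..x, ∫ t in 0..u, f t :=
    hf_even.odd_primitive.even_primitive
  rw [← integral_Ioc_eq_integral_Ioo, ← integral_of_le (by linarith)]
  simp_rw [integral_tails_comp_sub hf_even hf_int q]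
  rw [integral_sub intervalIntegrable_const ?_, intervalIntegral.integral_const,
    integral_comp_add_add_comp_sub (hF.intervalIntegrable _ _),
    integral_sub_mul_eq_integral_primitive hf_cont, integral_sub_mul_eq_integral_primitive hf_cont,
    ← integral_interval_sub_left (hF.intervalIntegrable 0 _) (hF.intervalIntegrable 0 _),
    ← hG_even (q - p), neg_sub, add_comm q p, smul_eq_mul, smul_eq_mul]
  · ring
  · exact ((hF.comp (continuous_const_add q)).add
      (hF.comp (continuous_sub_left q))).intervalIntegrable _ _

end

theorem continuous_one_add_sq_rpow (a : ℝ) : Continuous fun τ : ℝ ↦ (1 + τ ^ 2) ^ a :=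
  (continuous_const.add (continuous_pow 2)).rpow_const fun τ ↦
    Or.inl (by positivity : (1 : ℝ) + τ ^ 2 ≠ 0)

theorem integrable_one_add_sq_rpow_neg {r : ℝ} (hr : 1 < r) :
    Integrable fun τ : ℝ ↦ (1 + τ ^ 2) ^ (-r / 2) := by
  simpa only [Real.norm_eq_abs, sq_abs] using
    integrable_rpow_neg_one_add_norm_sq (E := ℝ) (μ := volume) (by simpa using hr)

theorem stmt_18_general (s : ℝ) (hs : 0 < s)
    (G : ℝ → ℝ) (A : ℝ)
    (hG : ∀ t, G t = ∫ τ in (0 : ℝ)..t, (t - τ) * (1 + τ ^ 2) ^ (-(2 + s) / 2))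
    (hA : A = ∫ τ in Set.Ioi (0 : ℝ), (1 + τ ^ 2) ^ (-(2 + s) / 2)) :
    ∀ p q : ℝ, 0 ≤ p → 0 ≤ q →
      2 * (2 * A * p + G (p - q) - G (p + q)) =
        ∫ w in Set.Ioo (-p) p,
          ((∫ z in Set.Iio (-q), (1 + (z - w) ^ 2) ^ (-(2 + s) / 2)) +
           ∫ z in Set.Ioi q, (1 + (z - w) ^ 2) ^ (-(2 + s) / 2)) := by
  intro p q hp _
  subst hA
  simp only [hG]
  exact (integral_Ioo_integral_tails_comp_sub (f := fun τ ↦ (1 + τ ^ 2) ^ (-(2 + s) / 2))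
    (continuous_one_add_sq_rpow _)
    (fun τ ↦ by simp only [neg_sq]) (integrable_one_add_sq_rpow_neg (by linarith)) hp q).symm

theorem stmt_18 (s : ℝ) (hs : 0 < s) (hs1 : s < 1)
    (G : ℝ → ℝ) (A : ℝ)
    (hG : ∀ t, G t = ∫ τ in (0 : ℝ)..t, (t - τ) * (1 + τ ^ 2) ^ (-(2 + s) / 2))
    (hA : A = ∫ τ in Set.Ioi (0 : ℝ), (1 + τ ^ 2) ^ (-(2 + s) / 2)) :
    ∀ p q : ℝ, 0 ≤ p → 0 ≤ q →
      2 * (2 * A * p + G (p - q) - G (p + q)) =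
        ∫ w in Set.Ioo (-p) p,
          ((∫ z in Set.Iio (-q), (1 + (z - w) ^ 2) ^ (-(2 + s) / 2)) +
           ∫ z in Set.Ioi q, (1 + (z - w) ^ 2) ^ (-(2 + s) / 2)) :=
  stmt_18_general s hs G A hG hA
end
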